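/- For every integer n ≥ 0 and every real x: 2^n·β_{n,λ/2}(x/2) = Σ_{k=0}^{n} C(n,k)·β_{k,λ}·E_{n−k,λ}(x), where β_{n,λ/2}(x/2) denotes the degenerate Bernoulli polynomial with parameter λ/2 evaluated at x/2. -/

import Mathlib

open Finset PowerSeries

noncomputable def dff (lam x : ℝ) (n : ℕ) : ℝ := ∏ i ∈ Finset.range n, (x - i * lam)

noncomputable def degExp (lam x : ℝ) : PowerSeries ℝ :=
  PowerSeries.mk fun k => dff lam x k / k.factorial

/-!
Substituting `t ↦ 2t` turns `e_{λ/2}^y(t)` into `e_λ^{2y}(t)`, so the generating function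
`F` of `2^n β_{n,λ/2}(x/2)` satisfies `F · (e_λ(t)² - 1) = 2t · e_λ^x(t)`. Since
`e_λ(t)² - 1 = (e_λ(t) - 1)(e_λ(t) + 1)` and the generating functions `G` of `β_{n,λ}` and
`H` of `E_{n,λ}(x)` satisfy `G · (e_λ(t) - 1) = t` and `H · (e_λ(t) + 1) = 2 e_λ^x(t)`,
cancelling the nonzero series `e_λ(t)² - 1` gives `F = G · H`. Comparing coefficients
yields the identity.
-/

noncomputable def egf {K : Type*} [Field K] (f : ℕ → K) : PowerSeries K :=
  PowerSeries.mk fun n => f n / n.factorial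

section egf

variable {K : Type*} [Field K]

lemma coeff_egf (f : ℕ → K) (n : ℕ) : coeff n (egf f) = f n / n.factorial :=
  coeff_mk _ _

lemma rescale_egf (c : K) (f : ℕ → K) :
    rescale c (egf f) = egf fun n => c ^ n * f n := by
  ext n
  rw [coeff_rescale, coeff_egf, coeff_egf, mul_div_assoc]

variable [CharZero K]

lemma egf_injective : Function.Injective (egf : (ℕ → K) → PowerSeries K) := by
  intro f g h
  funext n
  have hn := congrArg (coeff n) h
  rw [coeff_egf, coeff_egf] at hn
  exact (div_left_inj' (Nat.cast_ne_zero.mpr n.factorial_ne_zero)).mp hn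

lemma egf_mul (f g : ℕ → K) :
    egf f * egf g
      = egf fun n => ∑ ij ∈ antidiagonal n, (n.choose ij.1 : K) * f ij.1 * g ij.2 := by
  ext n
  rw [coeff_mul, coeff_egf, sum_div]
  refine sum_congr rfl fun ij hij => ?_
  rw [HasAntidiagonal.mem_antidiagonal] at hij
  subst hij
  have : ((ij.1 + ij.2).factorial : K) ≠ 0 := Nat.cast_ne_zero.mpr (Nat.factorial_ne_zero _)
  rw [coeff_egf, coeff_egf, Nat.cast_add_choose]
  field_simp

end egf

section dff

variable (lam : ℝ)

lemma dff_zero (x : ℝ) : dff lam x 0 = 1 := prod_range_zero _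

lemma dff_succ (x : ℝ) (n : ℕ) : dff lam x (n + 1) = dff lam x n * (x - n * lam) :=
  prod_range_succ _ _

lemma dff_zero_succ (n : ℕ) : dff lam 0 (n + 1) = 0 := by
  rw [dff, prod_range_succ', Nat.cast_zero, zero_mul, sub_zero, mul_zero]

lemma dff_mul (c y : ℝ) (n : ℕ) : dff (c * lam) (c * y) n = c ^ n * dff lam y n := by
  calc dff (c * lam) (c * y) n = ∏ i ∈ range n, c * (y - i * lam) :=
        prod_congr rfl fun i _ => by ring
    _ = c ^ n * dff lam y n := by rw [prod_mul_distrib, prod_const, card_range, dff]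

lemma dff_add (a b : ℝ) (n : ℕ) :
    dff lam (a + b) n
      = ∑ ij ∈ antidiagonal n, (n.choose ij.1 : ℝ) * dff lam a ij.1 * dff lam b ij.2 := by
  induction n with
  | zero => simp [dff_zero]
  | succ n ih =>
    simp_rw [mul_assoc]
    rw [sum_antidiagonal_choose_succ_mul (fun i j => dff lam a i * dff lam b j),
      dff_succ, ih, sum_mul, ← sum_add_distrib]
    refine sum_congr rfl fun ij hij => ?_
    rw [HasAntidiagonal.mem_antidiagonal] at hij
    rw [dff_succ, dff_succ, ← Nat.choose_symm_of_eq_add hij.symm,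
      show (n : ℝ) = ij.1 + ij.2 by exact_mod_cast hij.symm]
    ring

end dff

section degExp

variable (lam : ℝ)

lemma degExp_eq_egf (x : ℝ) : degExp lam x = egf (dff lam x) := rfl

lemma degExp_zero : degExp lam 0 = 1 := by
  ext (_ | n) <;> simp [degExp, dff_zero, dff_zero_succ, coeff_one]

lemma degExp_mul_degExp (a b : ℝ) : degExp lam a * degExp lam b = degExp lam (a + b) := by
  rw [degExp_eq_egf, degExp_eq_egf, degExp_eq_egf, egf_mul]
  congr 1
  funext n
  rw [dff_add]

lemma rescale_degExp (c y : ℝ) : rescale c (degExp lam y) = degExp (c * lam) (c * y) := by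
  rw [degExp_eq_egf, degExp_eq_egf, rescale_egf]
  congr 1
  funext n
  rw [dff_mul]

lemma degExp_sub_one_ne_zero {x : ℝ} (hx : x ≠ 0) : degExp lam x - 1 ≠ 0 := by
  intro h
  exact hx (by simpa [degExp, dff] using congrArg (coeff 1) h)

end degExp

theorem stmt7_general (lam : ℝ)
    (B : ℝ → ℝ → ℕ → ℝ) (E : ℝ → ℕ → ℝ)
    (hB : ∀ μ x, (PowerSeries.mk fun n => B μ x n / n.factorial) * (degExp μ 1 - 1)
        = (PowerSeries.X : PowerSeries ℝ) * degExp μ x)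
    (hE : ∀ x, (PowerSeries.mk fun n => E x n / n.factorial) * (degExp lam 1 + 1)
        = 2 * degExp lam x)
    (n : ℕ) (x : ℝ) :
    2 ^ n * B (lam / 2) (x / 2) n
      = ∑ k ∈ Finset.range (n + 1), (n.choose k : ℝ) * B lam 0 k * E x (n - k) := by
  have hsq : (degExp lam 1 - 1) * (degExp lam 1 + 1) = degExp lam 2 - 1 := by
    rw [show (degExp lam 1 - 1) * (degExp lam 1 + 1) = degExp lam 1 * degExp lam 1 - 1 by ring,
      degExp_mul_degExp, one_add_one_eq_two]
  have hF : rescale 2 (egf (B (lam / 2) (x / 2))) * (degExp lam 2 - 1)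
      = X * (2 * degExp lam x) := by
    have h := congrArg (rescale (2 : ℝ)) (hB (lam / 2) (x / 2))
    rw [map_mul, map_sub, map_one, map_mul, rescale_X, rescale_degExp, rescale_degExp,
      mul_div_cancel₀ lam two_ne_zero, mul_div_cancel₀ x two_ne_zero, mul_one] at h
    rw [egf, h, map_ofNat]
    ring
  have hG : egf (B lam 0) * (degExp lam 1 - 1) = X := by
    rw [egf, hB lam 0, degExp_zero, mul_one]
  have hH : egf (E x) * (degExp lam 1 + 1) = 2 * degExp lam x := hE x
  have hgf : rescale 2 (egf (B (lam / 2) (x / 2))) = egf (B lam 0) * egf (E x) :=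
    mul_right_cancel₀ (degExp_sub_one_ne_zero lam two_ne_zero) <| by
      rw [hF, ← hsq, ← hH, ← hG]
      ring
  rw [rescale_egf, egf_mul] at hgf
  rw [congrFun (egf_injective hgf) n, Nat.sum_antidiagonal_eq_sum_range_succ
    (fun i j => (n.choose i : ℝ) * B lam 0 i * E x j)]

theorem stmt7 (lam : ℝ) (hlam : lam ≠ 0)
    (B : ℝ → ℝ → ℕ → ℝ) (E : ℝ → ℕ → ℝ)
    (hB : ∀ μ x, (PowerSeries.mk fun n => B μ x n / n.factorial) * (degExp μ 1 - 1)
        = (PowerSeries.X : PowerSeries ℝ) * degExp μ x)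
    (hE : ∀ x, (PowerSeries.mk fun n => E x n / n.factorial) * (degExp lam 1 + 1)
        = 2 * degExp lam x)
    (n : ℕ) (x : ℝ) :
    2 ^ n * B (lam / 2) (x / 2) n
      = ∑ k ∈ Finset.range (n + 1), (n.choose k : ℝ) * B lam 0 k * E x (n - k) :=
  stmt7_general lam B E hB hE n x
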